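/- There exist parameters b > 0 and (a_1,a_2,r_1,r_2) ∈ ℝ^4 such that the equation a_2 + (a_1 + x^{r_1})^{r_2} = b·x has at least three distinct solutions x in I(a,r); in particular, for b = 1, r_1 = 2, r_2 = 1/3, a_1 = 0.004259259259, a_2 = −0.1516666667, the equation −0.1516666667 + (0.004259259259 + x²)^{1/3} − x = 0 has three distinct positive solutions. Consequently fp(2) = 3. -/

import Mathlib

open scoped BigOperators

noncomputable section

/-- The coefficient ring `R = ℤ[R₁,…,Rₙ]`. -/
abbrev Rring (n : ℕ) : Type := MvPolynomial (Fin n) ℤ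

/-- The ring `𝕃ₙ` of Laurent polynomials in `x₁,y₁,…,xₙ,yₙ` over `R`,
encoded as the monoid algebra of `ℤⁿ × ℤⁿ` (the exponents `(k,l)`). -/
abbrev Lring (n : ℕ) : Type :=
  AddMonoidAlgebra (Rring n) ((Fin n → ℤ) × (Fin n → ℤ))

namespace Panazzolo

/-- `Δⱼ = R₁⋯Rⱼ` (here `j` is 1-indexed: `Dl n j = ∏_{i<j} X i`). -/
def Dl (n j : ℕ) : Rring n :=
  ∏ i ∈ Finset.univ.filter (fun i : Fin n => (i : ℕ) < j), MvPolynomial.X i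

/-- Exponent of `P_{j-1} = x₁⋯x_{j-1}/(y₁⋯y_{j-1})` (with `j` 0-indexed). -/
def Pexp (n : ℕ) (j : Fin n) : (Fin n → ℤ) × (Fin n → ℤ) :=
  (fun i => if i < j then 1 else 0, fun i => if i < j then -1 else 0)

/-- The derivation `∂` on `𝕃ₙ`, determined by
`∂xⱼ = ∂yⱼ = Δⱼ xⱼ (x₁⋯x_{j-1})/(y₁⋯y_{j-1})`. -/
def der (n : ℕ) (p : Lring n) : Lring n :=
  p.coeff.sum fun kl c => ∑ j : Fin n,
    (AddMonoidAlgebra.single (kl + Pexp n j) ((kl.1 j) • (Dl n ((j : ℕ) + 1) * c)) +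
     AddMonoidAlgebra.single (kl + Pexp n j + (Pi.single j 1, Pi.single j (-1)))
       ((kl.2 j) • (Dl n ((j : ℕ) + 1) * c)))

/-- The coefficient `q` of `xᵢ^α yᵢ^β` in `p`, viewed as a polynomial in `(xᵢ,yᵢ)`
(the variables `xᵢ,yᵢ` are erased from the result). -/
def coeffAt (n : ℕ) (i : Fin n) (α β : ℤ) (p : Lring n) : Lring n :=
  ∑ kl ∈ p.coeff.support.filter (fun kl => kl.1 i = α ∧ kl.2 i = β),
    AddMonoidAlgebra.single (Function.update kl.1 i 0, Function.update kl.2 i 0) (p.coeff kl)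

/-- `k`-regularity of a Laurent polynomial (the paper's `𝕃ₖ^reg`), defined inductively:
`0`-regular means a nonzero element of the coefficient ring `R`; `p` is `(k+1)`-regular if it
is homogeneous, involves only the variables `x₁,y₁,…,x_{k+1},y_{k+1}`, is a genuine polynomial
in `(x_{k+1},y_{k+1})` of degree `m`, and the coefficient `q₀` of `x_{k+1}^0 y_{k+1}^m`
is `k`-regular. -/
def IsReg (n : ℕ) : ℕ → Lring n → Prop
  | 0, p => p ≠ 0 ∧ ∀ kl ∈ p.coeff.support, kl = 0
  | (k+1), p =>
      (∀ kl ∈ p.coeff.support, ∀ i : Fin n, k + 1 ≤ (i : ℕ) → kl.1 i = 0 ∧ kl.2 i = 0) ∧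
      (∃ d : Fin n → ℤ, ∀ kl ∈ p.coeff.support, kl.1 + kl.2 = d) ∧
      (∃ m : ℕ, (∀ kl ∈ p.coeff.support, ∀ i : Fin n, (i : ℕ) = k →
          0 ≤ kl.1 i ∧ 0 ≤ kl.2 i ∧ kl.1 i + kl.2 i = (m : ℤ)) ∧
        ∀ i : Fin n, (i : ℕ) = k → IsReg n k (coeffAt n i 0 (m : ℤ) p))

-- The exponent of the regularization monomial `reg(p)` (computed through the first `k`
-- variable pairs, from the top one down).
open Classical in
def regExp (n : ℕ) : ℕ → Lring n → (Fin n → ℤ) × (Fin n → ℤ)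
  | 0, _ => 0
  | (k+1), p =>
      if h : k < n ∧ p ≠ 0 then
        have hs : p.coeff.support.Nonempty := Finsupp.support_nonempty_iff.mpr
          (fun hc => h.2 (AddMonoidAlgebra.coeff_eq_zero.mp hc))
        let i : Fin n := ⟨k, h.1⟩
        let n0 : ℤ := (p.coeff.support.image fun kl => kl.1 i).min' (hs.image _)
        let l0 : ℤ := (p.coeff.support.image fun kl => kl.2 i).min' (hs.image _)
        let n1 : ℤ := (p.coeff.support.image fun kl => kl.2 i).max' (hs.image _)
        (Pi.single i n0, Pi.single i l0) + regExp n k (coeffAt n i n0 n1 p)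
      else 0

/-- Division by the regularization monomial: `q ↦ q/reg(q)`. -/
def divreg (n : ℕ) (q : Lring n) : Lring n :=
  AddMonoidAlgebra.single (-(regExp n n q)) 1 * q

/-- The derivation-division sequence `p⁽⁰⁾ = p`, `p⁽ᵏ⁺¹⁾ = ∂p⁽ᵏ⁾ / reg(∂p⁽ᵏ⁾)`. -/
def seqDD (n : ℕ) (p : Lring n) : ℕ → Lring n
  | 0 => p
  | (k+1) => divreg n (der n (seqDD n p k))

/-- `p` belongs to the coefficient ring `R ⊆ 𝕃ₙ`. -/
def InR (n : ℕ) (p : Lring n) : Prop := ∀ kl ∈ p.coeff.support, kl = 0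

/-- The reverse lexicographic (strict) order on `ℕⁿ`. -/
def rlexLt (n : ℕ) (d d' : Fin n → ℕ) : Prop :=
  ∃ i : Fin n, (∀ j : Fin n, i < j → d j = d' j) ∧ d i < d' i

/-- The monomial `yⱼ^e` (with `j` 1-indexed). -/
def ymon (n : ℕ) (j e : ℕ) : Lring n :=
  AddMonoidAlgebra.single (0, fun i : Fin n => if (i : ℕ) + 1 = j then (e : ℤ) else 0) 1

/-- The nested expression `Q_j + (⋯(Q₂ + (Q₁ + α y₁^{m₁}) y₂^{m₂})⋯) y_j^{m_j}`. -/
def nestedP (n : ℕ) (α : Rring n) (Q : ℕ → Lring n) (m : ℕ → ℕ) : ℕ → Lring n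
  | 0 => AddMonoidAlgebra.single 0 α
  | (j+1) => Q (j+1) + nestedP n α Q m j * ymon n (j+1) (m (j+1))

/-- Auxiliary recursion for the function `H_k` of Section 6. -/
def Haux {k : ℕ} (f : (Fin (k+1) → ℕ) → ℕ) : (Fin (k+1) → ℕ) → ℕ → ℕ
  | μ, 0 => f μ
  | μ, (t+1) => Haux f (Function.update μ (Fin.last k) (μ (Fin.last k) + f μ)) t

/-- The functions `H_k : ℕᵏ → ℕ` of Section 6. -/
def Hfun : (k : ℕ) → (Fin k → ℕ) → ℕ
  | 0, _ => 0
  | 1, m => m 0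
  | (k+2), m => Haux (Hfun (k+1)) (Fin.init m) (m (Fin.last (k+1)))

/-- The regular Laurent polynomial
`p = Δₙ ∑_{j=1}^n (Δⱼ−Δ_{j−1}) (∏_{i=1}^{j−1} xᵢ)(∏_{i=j}^{n−1} yᵢ)`
associated with equation (1) (it lives in the variables `x₁,…,x_{n−1},y₁,…,y_{n−1}`). -/
def pSpec (n : ℕ) : Lring n :=
  ∑ j ∈ Finset.Icc 1 n,
    AddMonoidAlgebra.single
      ((fun i : Fin n => if (i : ℕ) + 1 ≤ j - 1 then 1 else 0),
       (fun i : Fin n => if j ≤ (i : ℕ) + 1 ∧ (i : ℕ) + 1 ≤ n - 1 then (1 : ℤ) else 0))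
      (Dl n n * (Dl n j - Dl n (j - 1)))

/-- `DD(n)`: the number of steps of the derivation-division algorithm applied to `pSpec n`. -/
def DDnum (n : ℕ) : ℕ := sInf {m : ℕ | InR n (seqDD n (pSpec n) m)}

/-- The functions `gᵢ` : `g₀(x) = x`, `g_{i+1}(x) = a_{i+1} + gᵢ(x)^{r_{i+1}}` (real powers),
with 1-indexed parameter families `a r : ℕ → ℝ`. -/
def gfun (a r : ℕ → ℝ) : ℕ → ℝ → ℝ
  | 0 => fun x => x
  | (i+1) => fun x => a (i+1) + gfun a r i x ^ r (i+1)

/-- The functions `fᵢ` : `f_{i+1}(x) = gᵢ(x)^{r_{i+1}}`. -/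
def ffun (a r : ℕ → ℝ) : ℕ → ℝ → ℝ
  | 0 => fun _ => 1
  | (i+1) => fun x => gfun a r i x ^ r (i+1)

/-- The domain `I(a,r)`: the set of `x` where `g₀(x),…,gₙ(x)` are all strictly positive. -/
def Iset (n : ℕ) (a r : ℕ → ℝ) : Set ℝ := {x : ℝ | ∀ i ≤ n, 0 < gfun a r i x}

/-- The solution set `Sₙ(b,a,r) = {x ∈ I(a,r) : gₙ(x) = b x}`. -/
def Sset (n : ℕ) (b : ℝ) (a r : ℕ → ℝ) : Set ℝ :=
  {x ∈ Iset n a r | gfun a r n x = b * x}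

/-- The evaluation morphism `Ψ : 𝕃ₙ → C^ω(I(a,r))`, `Rᵢ ↦ rᵢ`, `xᵢ ↦ fᵢ`, `yᵢ ↦ gᵢ`
(defined pointwise). -/
def Psi (n : ℕ) (a r : ℕ → ℝ) (p : Lring n) : ℝ → ℝ := fun x =>
  p.coeff.sum fun kl c =>
    (MvPolynomial.aeval (fun i : Fin n => r ((i : ℕ) + 1)) c : ℝ) *
      ∏ i : Fin n, (ffun a r ((i : ℕ) + 1) x ^ kl.1 i * gfun a r ((i : ℕ) + 1) x ^ kl.2 i)

/-- `δⱼ = r₁⋯rⱼ` (with `δ₀ = 1`). -/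
def delta (r : ℕ → ℝ) (j : ℕ) : ℝ := ∏ i ∈ Finset.Icc 1 j, r i

/-- Extension of a `Fin n`-indexed parameter vector to a 1-indexed family `ℕ → ℝ`. -/
def extF (n : ℕ) (v : Fin n → ℝ) : ℕ → ℝ :=
  fun i => if h : 1 ≤ i ∧ i ≤ n then v ⟨i - 1, by omega⟩ else 0

end Panazzolo


/-- The solution set `S₂(b,a,r) = {x ∈ I(a,r) : a₂ + (a₁ + x^{r₁})^{r₂} = b·x}`. -/
def S2 (b a₁ a₂ r₁ r₂ : ℝ) : Set ℝ :=
  {x : ℝ | (0 < x ∧ 0 < a₁ + x ^ r₁ ∧ 0 < a₂ + (a₁ + x ^ r₁) ^ r₂) ∧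
    a₂ + (a₁ + x ^ r₁) ^ r₂ = b * x}

namespace Stmt14

lemma g1_lower {a₁ r₁ x₁ x₄ : ℝ} (h1 : 0 < x₁) (hg1 : 0 < a₁ + x₁ ^ r₁)
    (hg4 : 0 < a₁ + x₄ ^ r₁) : ∀ x ∈ Set.Icc x₁ x₄, 0 < a₁ + x ^ r₁ := by
  intro x hx
  rcases le_or_gt 0 r₁ with hr | hr
  · have := Real.rpow_le_rpow h1.le hx.1 hr
    linarith
  · have := Real.rpow_le_rpow_of_nonpos (lt_of_lt_of_le h1 hx.1) hx.2 hr.le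
    linarith

lemma hasDeriv_phi {b a₁ a₂ r₁ r₂ x : ℝ} (hx : 0 < x) (hg : 0 < a₁ + x ^ r₁) :
    HasDerivAt (fun y : ℝ => a₂ + (a₁ + y ^ r₁) ^ r₂ - b * y)
      (r₁ * x ^ (r₁ - 1) * r₂ * (a₁ + x ^ r₁) ^ (r₂ - 1) - b) x := by
  have h1 : HasDerivAt (fun y : ℝ => a₁ + y ^ r₁) (r₁ * x ^ (r₁ - 1)) x :=
    (Real.hasDerivAt_rpow_const (Or.inl hx.ne')).const_add a₁
  have h2 := h1.rpow_const (p := r₂) (Or.inl hg.ne')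
  have h3 := (h2.const_add a₂).sub ((hasDerivAt_id x).const_mul b)
  exact h3.congr_deriv (by ring)

lemma hasDeriv_psi {b a₁ r₁ r₂ x : ℝ} (hx : 0 < x) (hg : 0 < a₁ + x ^ r₁) :
    HasDerivAt (fun y : ℝ => r₁ * y ^ (r₁ - 1) * r₂ * (a₁ + y ^ r₁) ^ (r₂ - 1) - b)
      (r₁ * r₂ * (x ^ (r₁ - 2) * (a₁ + x ^ r₁) ^ (r₂ - 2)) *
        ((r₁ - 1) * a₁ + (r₁ * r₂ - 1) * x ^ r₁)) x := by
  have hu : HasDerivAt (fun y : ℝ => r₁ * y ^ (r₁ - 1) * r₂)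
      (r₁ * ((r₁ - 1) * x ^ (r₁ - 1 - 1)) * r₂) x :=
    ((Real.hasDerivAt_rpow_const (Or.inl hx.ne')).const_mul r₁).mul_const r₂
  have h1 : HasDerivAt (fun y : ℝ => a₁ + y ^ r₁) (r₁ * x ^ (r₁ - 1)) x :=
    (Real.hasDerivAt_rpow_const (Or.inl hx.ne')).const_add a₁
  have hv := h1.rpow_const (p := r₂ - 1) (Or.inl hg.ne')
  have h := (hu.mul hv).sub_const b
  refine h.congr_deriv ?_
  symm
  have E2 : r₁ - 1 - 1 = r₁ - 2 := by ring
  have E4 : r₂ - 1 - 1 = r₂ - 2 := by ring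
  rw [E2, E4]
  have E1 : x ^ (r₁ - 1) = x ^ (r₁ - 2) * x := by
    rw [show r₁ - 1 = r₁ - 2 + 1 from by ring, Real.rpow_add hx, Real.rpow_one]
  have E3 : (a₁ + x ^ r₁) ^ (r₂ - 1) = (a₁ + x ^ r₁) ^ (r₂ - 2) * (a₁ + x ^ r₁) := by
    rw [show r₂ - 1 = r₂ - 2 + 1 from by ring, Real.rpow_add hg, Real.rpow_one]
  have E5 : x ^ (r₁ - 2) * x * x = x ^ r₁ := by
    conv_rhs => rw [show r₁ = r₁ - 2 + 1 + 1 from by ring]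
    rw [Real.rpow_add hx, Real.rpow_add hx, Real.rpow_one]
  rw [E1, E3]
  set A := x ^ (r₁ - 2) with hA
  set P := x ^ r₁ with hP
  set H := (a₁ + P) ^ (r₂ - 2) with hH
  linear_combination (-(r₁ ^ 2 * r₂ * (r₂ - 1) * A * H)) * E5

lemma Bzero {a₁ r₁ r₂ x : ℝ} (hx : 0 < x) (hg : 0 < a₁ + x ^ r₁)
    (hr₁ : r₁ ≠ 0) (hr₂ : r₂ ≠ 0)
    (h : r₁ * r₂ * (x ^ (r₁ - 2) * (a₁ + x ^ r₁) ^ (r₂ - 2)) *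
        ((r₁ - 1) * a₁ + (r₁ * r₂ - 1) * x ^ r₁) = 0) :
    (r₁ - 1) * a₁ + (r₁ * r₂ - 1) * x ^ r₁ = 0 := by
  have h1 : (0:ℝ) < x ^ (r₁ - 2) := Real.rpow_pos_of_pos hx _
  have h2 : (0:ℝ) < (a₁ + x ^ r₁) ^ (r₂ - 2) := Real.rpow_pos_of_pos hg _
  rcases mul_eq_zero.mp h with h' | h'
  · rcases mul_eq_zero.mp h' with h'' | h''
    · exact absurd h'' (mul_ne_zero hr₁ hr₂)
    · exact absurd h'' (by positivity)
  · exact h'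


lemma key {b a₁ a₂ r₁ r₂ : ℝ} (hb : 0 < b) {x₁ x₂ x₃ x₄ : ℝ}
    (h12 : x₁ < x₂) (h23 : x₂ < x₃) (h34 : x₃ < x₄)
    (m1 : x₁ ∈ S2 b a₁ a₂ r₁ r₂) (m2 : x₂ ∈ S2 b a₁ a₂ r₁ r₂)
    (m3 : x₃ ∈ S2 b a₁ a₂ r₁ r₂) (m4 : x₄ ∈ S2 b a₁ a₂ r₁ r₂) :
    Set.uIcc x₁ x₂ ⊆ S2 b a₁ a₂ r₁ r₂ := by
  simp only [S2, Set.mem_setOf_eq] at m1 m2 m3 m4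
  obtain ⟨⟨hp1, hq1, hs1⟩, he1⟩ := m1
  obtain ⟨⟨hp2, hq2, hs2⟩, he2⟩ := m2
  obtain ⟨⟨hp3, hq3, hs3⟩, he3⟩ := m3
  obtain ⟨⟨hp4, hq4, hs4⟩, he4⟩ := m4
  rw [Set.uIcc_of_le h12.le]
  by_cases hr₁ : r₁ = 0
  · exfalso
    subst hr₁
    rw [Real.rpow_zero] at he1 he2
    have h := mul_left_cancel₀ hb.ne' (he1 ▸ he2 ▸ rfl : b * x₂ = b * x₁)
    linarith
  by_cases hr₂ : r₂ = 0
  · exfalso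
    subst hr₂
    rw [Real.rpow_zero] at he1 he2
    have h := mul_left_cancel₀ hb.ne' (he1 ▸ he2 ▸ rfl : b * x₂ = b * x₁)
    linarith
  by_cases hdeg : r₁ * r₂ = 1 ∧ (a₁ = 0 ∨ r₁ = 1)
  · obtain ⟨hrr, hcase⟩ := hdeg
    rcases hcase with ha | hr1
    · subst ha
      have hxx : ∀ x : ℝ, 0 < x → ((0:ℝ) + x ^ r₁) ^ r₂ = x := by
        intro x hx
        rw [zero_add, ← Real.rpow_mul hx.le, hrr, Real.rpow_one]
      rw [hxx x₁ hp1] at he1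
      rw [hxx x₂ hp2] at he2
      have hb1 : b = 1 := by
        have h0 : (b - 1) * (x₂ - x₁) = 0 := by linear_combination he1 - he2
        rcases mul_eq_zero.mp h0 with h | h
        · linarith
        · exfalso; linarith
      have ha2 : a₂ = 0 := by rw [hb1, one_mul] at he1; linarith
      intro x hx
      have hxpos : 0 < x := lt_of_lt_of_le hp1 hx.1
      refine ⟨⟨hxpos, ?_, ?_⟩, ?_⟩
      · rw [zero_add]; exact Real.rpow_pos_of_pos hxpos r₁
      · rw [hxx x hxpos, ha2]; linarith
      · rw [hxx x hxpos, ha2, hb1]; ring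
    · subst hr1
      have hr2 : r₂ = 1 := by rw [one_mul] at hrr; exact hrr
      subst hr2
      rw [Real.rpow_one, Real.rpow_one] at he1 he2
      rw [Real.rpow_one] at hq1
      have hb1 : b = 1 := by
        have h0 : (b - 1) * (x₂ - x₁) = 0 := by linear_combination he1 - he2
        rcases mul_eq_zero.mp h0 with h | h
        · linarith
        · exfalso; linarith
      have ha2 : a₂ + a₁ = 0 := by rw [hb1, one_mul] at he1; linarith
      intro x hx
      have hxpos : 0 < x := lt_of_lt_of_le hp1 hx.1
      refine ⟨⟨hxpos, ?_, ?_⟩, ?_⟩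
      · rw [Real.rpow_one]; have := hx.1; linarith
      · rw [Real.rpow_one, Real.rpow_one]; linarith
      · rw [Real.rpow_one, Real.rpow_one, hb1]; linarith
  · exfalso
    push_neg at hdeg
    have hIcc : ∀ u v : ℝ, u ∈ Set.Icc x₁ x₄ → v ∈ Set.Icc x₁ x₄ →
        Set.Icc u v ⊆ Set.Icc x₁ x₄ := fun u v hu hv => Set.Icc_subset_Icc hu.1 hv.2
    have hpos : ∀ x ∈ Set.Icc x₁ x₄, 0 < x := fun x hx => lt_of_lt_of_le hp1 hx.1
    have hgpos : ∀ x ∈ Set.Icc x₁ x₄, 0 < a₁ + x ^ r₁ := g1_lower hp1 hq1 hq4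
    have hD : ∀ x ∈ Set.Icc x₁ x₄,
        HasDerivAt (fun y : ℝ => a₂ + (a₁ + y ^ r₁) ^ r₂ - b * y)
          (r₁ * x ^ (r₁ - 1) * r₂ * (a₁ + x ^ r₁) ^ (r₂ - 1) - b) x :=
      fun x hx => hasDeriv_phi (hpos x hx) (hgpos x hx)
    have hcont : ContinuousOn (fun y : ℝ => a₂ + (a₁ + y ^ r₁) ^ r₂ - b * y)
        (Set.Icc x₁ x₄) := fun x hx => ((hD x hx).continuousAt).continuousWithinAt
    have R : ∀ u v : ℝ, u ∈ Set.Icc x₁ x₄ → v ∈ Set.Icc x₁ x₄ → u < v →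
        (a₂ + (a₁ + u ^ r₁) ^ r₂ - b * u) = (a₂ + (a₁ + v ^ r₁) ^ r₂ - b * v) →
        ∃ c ∈ Set.Ioo u v,
          r₁ * c ^ (r₁ - 1) * r₂ * (a₁ + c ^ r₁) ^ (r₂ - 1) - b = 0 := by
      intro u v hu hv huv he
      exact exists_hasDerivAt_eq_zero huv (hcont.mono (hIcc u v hu hv)) he
        (fun x hx => hD x (hIcc u v hu hv (Set.Ioo_subset_Icc_self hx)))
    have hm1 : x₁ ∈ Set.Icc x₁ x₄ := ⟨le_refl _, by linarith⟩
    have hm2 : x₂ ∈ Set.Icc x₁ x₄ := ⟨by linarith, by linarith⟩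
    have hm3 : x₃ ∈ Set.Icc x₁ x₄ := ⟨by linarith, by linarith⟩
    have hm4 : x₄ ∈ Set.Icc x₁ x₄ := ⟨by linarith, le_refl _⟩
    obtain ⟨c₁, hc₁, hz₁⟩ := R x₁ x₂ hm1 hm2 h12 (by rw [he1, he2]; ring)
    obtain ⟨c₂, hc₂, hz₂⟩ := R x₂ x₃ hm2 hm3 h23 (by rw [he2, he3]; ring)
    obtain ⟨c₃, hc₃, hz₃⟩ := R x₃ x₄ hm3 hm4 h34 (by rw [he3, he4]; ring)
    have hmc₁ : c₁ ∈ Set.Icc x₁ x₄ := ⟨hc₁.1.le, by have := hc₁.2; linarith⟩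
    have hmc₂ : c₂ ∈ Set.Icc x₁ x₄ := ⟨by have := hc₂.1; linarith, by have := hc₂.2; linarith⟩
    have hmc₃ : c₃ ∈ Set.Icc x₁ x₄ := ⟨by have := hc₃.1; linarith, hc₃.2.le⟩
    have hD2 : ∀ x ∈ Set.Icc x₁ x₄,
        HasDerivAt (fun y : ℝ => r₁ * y ^ (r₁ - 1) * r₂ * (a₁ + y ^ r₁) ^ (r₂ - 1) - b)
          (r₁ * r₂ * (x ^ (r₁ - 2) * (a₁ + x ^ r₁) ^ (r₂ - 2)) *
            ((r₁ - 1) * a₁ + (r₁ * r₂ - 1) * x ^ r₁)) x :=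
      fun x hx => hasDeriv_psi (hpos x hx) (hgpos x hx)
    have hcont2 : ContinuousOn (fun y : ℝ => r₁ * y ^ (r₁ - 1) * r₂ * (a₁ + y ^ r₁) ^ (r₂ - 1) - b)
        (Set.Icc x₁ x₄) := fun x hx => ((hD2 x hx).continuousAt).continuousWithinAt
    have R2 : ∀ u v : ℝ, u ∈ Set.Icc x₁ x₄ → v ∈ Set.Icc x₁ x₄ → u < v →
        (r₁ * u ^ (r₁ - 1) * r₂ * (a₁ + u ^ r₁) ^ (r₂ - 1) - b) =
          (r₁ * v ^ (r₁ - 1) * r₂ * (a₁ + v ^ r₁) ^ (r₂ - 1) - b) →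
        ∃ d ∈ Set.Ioo u v,
          r₁ * r₂ * (d ^ (r₁ - 2) * (a₁ + d ^ r₁) ^ (r₂ - 2)) *
            ((r₁ - 1) * a₁ + (r₁ * r₂ - 1) * d ^ r₁) = 0 := by
      intro u v hu hv huv he
      exact exists_hasDerivAt_eq_zero huv (hcont2.mono (hIcc u v hu hv)) he
        (fun x hx => hD2 x (hIcc u v hu hv (Set.Ioo_subset_Icc_self hx)))
    have hc₁₂ : c₁ < c₂ := lt_trans hc₁.2 hc₂.1
    have hc₂₃ : c₂ < c₃ := lt_trans hc₂.2 hc₃.1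
    obtain ⟨d₁, hd₁, hB₁⟩ := R2 c₁ c₂ hmc₁ hmc₂ hc₁₂ (by rw [hz₁, hz₂])
    obtain ⟨d₂, hd₂, hB₂⟩ := R2 c₂ c₃ hmc₂ hmc₃ hc₂₃ (by rw [hz₂, hz₃])
    have hmd₁ : d₁ ∈ Set.Icc x₁ x₄ :=
      ⟨le_trans hmc₁.1 hd₁.1.le, le_trans hd₁.2.le hmc₂.2⟩
    have hmd₂ : d₂ ∈ Set.Icc x₁ x₄ :=
      ⟨le_trans hmc₂.1 hd₂.1.le, le_trans hd₂.2.le hmc₃.2⟩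
    have hd₁pos : 0 < d₁ := hpos d₁ hmd₁
    have hd₂pos : 0 < d₂ := hpos d₂ hmd₂
    have B1 := Bzero hd₁pos (hgpos d₁ hmd₁) hr₁ hr₂ hB₁
    have B2 := Bzero hd₂pos (hgpos d₂ hmd₂) hr₁ hr₂ hB₂
    have hdlt : d₁ < d₂ := lt_trans hd₁.2 hd₂.1
    by_cases hrr : r₁ * r₂ = 1
    · obtain ⟨ha1, hr1⟩ := hdeg hrr
      rw [hrr, sub_self, zero_mul, add_zero] at B1
      rcases mul_eq_zero.mp B1 with h | h
      · exact hr1 (by linarith)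
      · exact ha1 h
    · have hEq : d₁ ^ r₁ = d₂ ^ r₁ := by
        have h0 : (r₁ * r₂ - 1) * (d₁ ^ r₁ - d₂ ^ r₁) = 0 := by linear_combination B1 - B2
        have hne2 : r₁ * r₂ - 1 ≠ 0 := sub_ne_zero.mpr hrr
        have := (mul_eq_zero.mp h0).resolve_left hne2
        linarith
      have hdd : d₁ = d₂ := by
        have h := congrArg (fun t : ℝ => t ^ r₁⁻¹) hEq
        simpa [Real.rpow_rpow_inv hd₁pos.le hr₁, Real.rpow_rpow_inv hd₂pos.le hr₁] using h
      exact absurd hdd hdlt.ne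


lemma lt_cbrt {s t : ℝ} (hs : 0 ≤ s) (h : s ^ (3:ℕ) < t) : s < t ^ ((1:ℝ)/3) := by
  have h0 : (0:ℝ) ≤ s ^ (3:ℕ) := by positivity
  have h1 := Real.rpow_lt_rpow h0 h (by norm_num : (0:ℝ) < ((3:ℕ):ℝ)⁻¹)
  rwa [Real.pow_rpow_inv_natCast hs (by norm_num), show ((3:ℕ):ℝ)⁻¹ = (1:ℝ)/3 by norm_num] at h1

lemma cbrt_lt {s t : ℝ} (hs : 0 ≤ s) (ht : 0 ≤ t) (h : t < s ^ (3:ℕ)) : t ^ ((1:ℝ)/3) < s := by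
  have h1 := Real.rpow_lt_rpow ht h (by norm_num : (0:ℝ) < ((3:ℕ):ℝ)⁻¹)
  rwa [Real.pow_rpow_inv_natCast hs (by norm_num), show ((3:ℕ):ℝ)⁻¹ = (1:ℝ)/3 by norm_num] at h1

lemma sq_rpow (x : ℝ) : x ^ (2:ℝ) = x * x := by
  rw [show (2:ℝ) = ((2:ℕ):ℝ) by norm_num, Real.rpow_natCast]; ring

end Stmt14

/-- For `b = 1`, `r₁ = 2`, `r₂ = 1/3`, `a₁ = 0.004259259259`,
`a₂ = −0.1516666667`, the equation `a₂ + (a₁ + x²)^{1/3} = x` has three distinct positive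
isolated solutions in `I(a,r)` (in particular some choice of parameters yields three distinct
solutions); consequently `fp(2) = 3`: the solution set has exactly `3` connected components in
this example, and for every choice of parameters it has at most `3`. -/
theorem statement14 :
    (∃ x₁ x₂ x₃ : ℝ, 0 < x₁ ∧ x₁ < x₂ ∧ x₂ < x₃ ∧
      x₁ ∈ S2 1 0.004259259259 (-0.1516666667) 2 (1/3) ∧
      x₂ ∈ S2 1 0.004259259259 (-0.1516666667) 2 (1/3) ∧
      x₃ ∈ S2 1 0.004259259259 (-0.1516666667) 2 (1/3) ∧
      ¬ Set.uIcc x₁ x₂ ⊆ S2 1 0.004259259259 (-0.1516666667) 2 (1/3) ∧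
      ¬ Set.uIcc x₁ x₃ ⊆ S2 1 0.004259259259 (-0.1516666667) 2 (1/3) ∧
      ¬ Set.uIcc x₂ x₃ ⊆ S2 1 0.004259259259 (-0.1516666667) 2 (1/3)) ∧
    (∀ b a₁ a₂ r₁ r₂ : ℝ, 0 < b →
      ∀ f : Fin 4 → ℝ, (∀ i, f i ∈ S2 b a₁ a₂ r₁ r₂) →
        ∃ i j, i ≠ j ∧ Set.uIcc (f i) (f j) ⊆ S2 b a₁ a₂ r₁ r₂) := by
  constructor
  · -- Part 1
    set F : ℝ → ℝ := fun x => (0.004259259259 + x * x) ^ ((1:ℝ)/3) - 0.1516666667 - x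
      with hF
    have hFcont : Continuous F := by
      have h2 : Continuous fun x : ℝ => (0.004259259259 : ℝ) + x * x := by fun_prop
      have hne : ∀ x : ℝ, (0.004259259259 : ℝ) + x * x ≠ 0 := by
        intro x
        have : (0:ℝ) < 0.004259259259 + x * x := by nlinarith [mul_self_nonneg x]
        exact this.ne'
      exact ((h2.rpow_const fun x => Or.inl (hne x)).sub continuous_const).sub
        continuous_id
    -- sign evaluations
    have hv : ∀ p : ℝ, 0 ≤ p → (p + 0.1516666667) ^ (3:ℕ) < 0.004259259259 + p * p →
        0 < F p := by
      intro p hp h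
      have := Stmt14.lt_cbrt (by positivity : (0:ℝ) ≤ p + 0.1516666667) h
      simp only [hF]
      linarith
    have hv' : ∀ p : ℝ, 0 ≤ p → 0.004259259259 + p * p < (p + 0.1516666667) ^ (3:ℕ) →
        F p < 0 := by
      intro p hp h
      have h0 : (0:ℝ) ≤ 0.004259259259 + p * p := by positivity
      have := Stmt14.cbrt_lt (by positivity : (0:ℝ) ≤ p + 0.1516666667) h0 h
      simp only [hF]
      linarith
    have s1 : 0 < F 0.01 := hv 0.01 (by norm_num) (by norm_num)
    have s2 : F 0.05 < 0 := hv' 0.05 (by norm_num) (by norm_num)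
    have s3 : 0 < F 0.25 := hv 0.25 (by norm_num) (by norm_num)
    have s4 : F 0.4 < 0 := hv' 0.4 (by norm_num) (by norm_num)
    obtain ⟨x₁, hx₁I, hx₁⟩ := intermediate_value_Ioo' (by norm_num : (0.01:ℝ) ≤ 0.05)
      hFcont.continuousOn (⟨s2, s1⟩ : (0:ℝ) ∈ Set.Ioo (F 0.05) (F 0.01))
    obtain ⟨x₂, hx₂I, hx₂⟩ := intermediate_value_Ioo (by norm_num : (0.05:ℝ) ≤ 0.25)
      hFcont.continuousOn (⟨s2, s3⟩ : (0:ℝ) ∈ Set.Ioo (F 0.05) (F 0.25))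
    obtain ⟨x₃, hx₃I, hx₃⟩ := intermediate_value_Ioo' (by norm_num : (0.25:ℝ) ≤ 0.4)
      hFcont.continuousOn (⟨s4, s3⟩ : (0:ℝ) ∈ Set.Ioo (F 0.4) (F 0.25))
    have hmem : ∀ x : ℝ, 0 < x → F x = 0 →
        x ∈ S2 1 0.004259259259 (-0.1516666667) 2 (1/3) := by
      intro x hx hFx
      simp only [hF] at hFx
      have heq : (0.004259259259 + x * x) ^ ((1:ℝ)/3) = x + 0.1516666667 := by linarith
      simp only [S2, Set.mem_setOf_eq, Stmt14.sq_rpow]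
      refine ⟨⟨hx, by positivity, ?_⟩, ?_⟩
      · rw [heq]; linarith
      · rw [heq]; ring
    have hnm : ∀ p : ℝ, F p ≠ 0 → p ∉ S2 1 0.004259259259 (-0.1516666667) 2 (1/3) := by
      intro p hp hmem
      obtain ⟨-, he⟩ := hmem
      rw [Stmt14.sq_rpow] at he
      apply hp
      simp only [hF]
      linarith [he]
    refine ⟨x₁, x₂, x₃, by linarith [hx₁I.1], by linarith [hx₁I.2, hx₂I.1],
      by linarith [hx₂I.2, hx₃I.1],
      hmem x₁ (by linarith [hx₁I.1]) hx₁, hmem x₂ (by linarith [hx₂I.1]) hx₂,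
      hmem x₃ (by linarith [hx₃I.1]) hx₃, ?_, ?_, ?_⟩
    · intro hsub
      exact hnm 0.05 s2.ne (hsub (by
        rw [Set.uIcc_of_le (by linarith [hx₁I.2, hx₂I.1] : x₁ ≤ x₂)]
        exact ⟨by linarith [hx₁I.2], by linarith [hx₂I.1]⟩))
    · intro hsub
      exact hnm 0.05 s2.ne (hsub (by
        rw [Set.uIcc_of_le (by linarith [hx₁I.2, hx₂I.1, hx₂I.2, hx₃I.1] : x₁ ≤ x₃)]
        exact ⟨by linarith [hx₁I.2], by linarith [hx₂I.1, hx₂I.2, hx₃I.1]⟩))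
    · intro hsub
      exact hnm 0.25 s3.ne' (hsub (by
        rw [Set.uIcc_of_le (by linarith [hx₂I.2, hx₃I.1] : x₂ ≤ x₃)]
        exact ⟨by linarith [hx₂I.2], by linarith [hx₃I.1]⟩))
  · -- Part 2
    intro b a₁ a₂ r₁ r₂ hb f hf
    by_cases hrep : ∃ i j : Fin 4, i ≠ j ∧ f i = f j
    · obtain ⟨i, j, hij, hfe⟩ := hrep
      exact ⟨i, j, hij, by rw [hfe, Set.uIcc_self]; exact Set.singleton_subset_iff.mpr (hf j)⟩
    · push_neg at hrep
      have hinj : Function.Injective f := fun i j h => by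
        by_contra hne; exact (hrep i j hne) h
      have hcard : (Finset.image f Finset.univ).card = 4 := by
        rw [Finset.card_image_of_injective _ hinj, Finset.card_univ, Fintype.card_fin]
      set e := (Finset.image f Finset.univ).orderIsoOfFin hcard with he
      have hmono : ∀ i j : Fin 4, i < j → (e i : ℝ) < (e j : ℝ) := fun i j h => e.strictMono h
      have hmem : ∀ i : Fin 4, ∃ k : Fin 4, f k = (e i : ℝ) := by
        intro i
        have h := (e i).2
        simpa using Finset.mem_image.mp h
      obtain ⟨k₀, hk₀⟩ := hmem 0
      obtain ⟨k₁, hk₁⟩ := hmem 1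
      obtain ⟨k₂, hk₂⟩ := hmem 2
      obtain ⟨k₃, hk₃⟩ := hmem 3
      have hsub := Stmt14.key hb (hmono 0 1 (by decide)) (hmono 1 2 (by decide))
        (hmono 2 3 (by decide)) (hk₀ ▸ hf k₀) (hk₁ ▸ hf k₁) (hk₂ ▸ hf k₂) (hk₃ ▸ hf k₃)
      refine ⟨k₀, k₁, ?_, ?_⟩
      · intro h
        have := hmono 0 1 (by decide)
        rw [← hk₀, ← hk₁, h] at this
        exact lt_irrefl _ this
      · rw [hk₀, hk₁]; exact hsub
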